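/- Lemma (persistence pair preservation under perturbation; the paper's Fact 3.16). Let r be an order with levels on X and let (τ₀, ω₀) be a persistence pair of r. Denote by ω_e the n-cell having τ₀ as a face that lies in K_V(G(≻_r τ₀), ω₀), by ω_e′ the other n-cell having τ₀ as a face, and by ω₁ the ≼_r-maximum n-cell of K_V(G(≻_r τ₀), ω_e′). Let P be any path from ω₀ to ω_e in the graph G(≻_r τ₀), let η > 0, let A ⊆ X^(n−1) be the union of the set of edges of P, the singleton {τ₀}, and the set of (n−1)-simplices that are edges of the connected component of ω₁ in G(≻_r τ₀), and let q = q(r, η, A). Then (τ₀, ω₀) is a persistence pair of q; i.e., τ_{q,ω₀} = τ₀. -/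

import Mathlib

open scoped Classical

namespace StableVol

/-- A finite abstract simplicial complex of dimension `n`: a finite family of nonempty
finite subsets of the vertex set, closed under nonempty subsets, in which every element
is contained in an element of cardinality `n+1`. -/
structure NComplex (V : Type*) [DecidableEq V] (n : ℕ) where
  X : Finset (Finset V)
  nonempty_mem : ∀ σ ∈ X, σ.Nonempty
  down_closed : ∀ σ ∈ X, ∀ σ' : Finset V, σ' ⊆ σ → σ'.Nonempty → σ' ∈ X
  contained_top : ∀ σ ∈ X, ∃ ω ∈ X, σ ⊆ ω ∧ ω.card = n + 1

variable {V : Type*} [DecidableEq V] {n : ℕ}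

/-- An `n`-cell is either an `n`-simplex (`some ω`) or the formal cell `ω∞` (`none`). -/
abbrev Cell (V : Type*) := Option (Finset V)

/-- `τ` is a face of the cell `c`.  For `c = some ω` this means that `ω` is an
`n`-simplex of `X` containing `τ`; the faces of `ω∞ = none` are the `(n-1)`-simplices
having exactly one `n`-simplex coface. -/
def faceCell (C : NComplex V n) (τ : Finset V) : Cell V → Prop
  | some ω => ω ∈ C.X ∧ ω.card = n + 1 ∧ τ ⊆ ω
  | none => {ω | ω ∈ C.X ∧ ω.card = n + 1 ∧ τ ⊆ ω}.ncard = 1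

def IsCell (C : NComplex V n) : Cell V → Prop
  | some ω => ω ∈ C.X ∧ ω.card = n + 1
  | none => True

/-- Adjacency in the dual graph, restricted to the edge set `E ⊆ X^(n-1)`. -/
def adj (C : NComplex V n) (E : Set (Finset V)) (c c' : Cell V) : Prop :=
  ∃ τ ∈ E, faceCell C τ c ∧ faceCell C τ c' ∧ c ≠ c'

/-- `KV C E c₀`: the set of `n`-cells in the connected component of `c₀` in the
subgraph of the dual graph with edge set `E`. -/
def KV (C : NComplex V n) (E : Set (Finset V)) (c₀ : Cell V) : Set (Cell V) :=
  {c | Relation.ReflTransGen (adj C E) c₀ c}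

/-- Every `(n-1)`-simplex of `X` is a face of exactly two `n`-cells. -/
def TwoCofaces (C : NComplex V n) : Prop :=
  ∀ τ ∈ C.X, τ.card = n →
    ∃ c₁ c₂ : Cell V, c₁ ≠ c₂ ∧ ∀ c : Cell V, faceCell C τ c ↔ (c = c₁ ∨ c = c₂)

/-- The dual graph (with full edge set `X^(n-1)`) is connected. -/
def DualConn (C : NComplex V n) : Prop :=
  ∀ c c' : Cell V, IsCell C c → IsCell C c' →
    c' ∈ KV C {τ | τ ∈ C.X ∧ τ.card = n} c

/-- A level function: monotone with respect to strict inclusion of simplices. -/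
def IsLevelFun (C : NComplex V n) (lev : Finset V → ℝ) : Prop :=
  ∀ σ ∈ C.X, ∀ σ' ∈ C.X, σ ⊂ σ' → lev σ ≤ lev σ'

/-- `(lev, slt)` is an order with levels on `X`: `lev` is a level function and `slt`
is (the strict form of) a linear order on `X` refining both `lev` and strict
inclusion. -/
def IsOWL (C : NComplex V n) (lev : Finset V → ℝ)
    (slt : Finset V → Finset V → Prop) : Prop :=
  IsLevelFun C lev ∧
  (∀ σ ∈ C.X, ¬ slt σ σ) ∧
  (∀ σ ∈ C.X, ∀ σ' ∈ C.X, ∀ σ'' ∈ C.X, slt σ σ' → slt σ' σ'' → slt σ σ'') ∧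
  (∀ σ ∈ C.X, ∀ σ' ∈ C.X, σ ≠ σ' → slt σ σ' ∨ slt σ' σ) ∧
  (∀ σ ∈ C.X, ∀ σ' ∈ C.X, slt σ σ' → lev σ ≤ lev σ') ∧
  (∀ σ ∈ C.X, ∀ σ' ∈ C.X, σ ⊂ σ' → slt σ σ')

/-- Extension of a strict order on simplices to `n`-cells, `ω∞ = none` being the
unique maximum. -/
def cslt (slt : Finset V → Finset V → Prop) : Cell V → Cell V → Prop
  | some σ, some σ' => slt σ σ'
  | some _, none => True
  | none, _ => False

/-- `m` is the maximum cell of the set `S` with respect to the order `slt`. -/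
def IsMaxCell (slt : Finset V → Finset V → Prop) (S : Set (Cell V)) (m : Cell V) :
    Prop :=
  m ∈ S ∧ ∀ c ∈ S, c ≠ m → cslt slt c m

/-- Edge set of `G(≻ σ₀)`: the `(n-1)`-simplices strictly above `σ₀`. -/
def Egt (C : NComplex V n) (slt : Finset V → Finset V → Prop) (σ₀ : Finset V) :
    Set (Finset V) :=
  {τ | τ ∈ C.X ∧ τ.card = n ∧ slt σ₀ τ}

/-- Edge set of `G(⪰ σ₀)`. -/
def Ege (C : NComplex V n) (slt : Finset V → Finset V → Prop) (σ₀ : Finset V) :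
    Set (Finset V) :=
  {τ | τ ∈ C.X ∧ τ.card = n ∧ (τ = σ₀ ∨ slt σ₀ τ)}

/-- Edge set of `G(lev ≥ s)`. -/
def Elev (C : NComplex V n) (lev : Finset V → ℝ) (s : ℝ) : Set (Finset V) :=
  {τ | τ ∈ C.X ∧ τ.card = n ∧ s ≤ lev τ}

/-- `(τ₀, ω₀)` is a persistence pair of the order `slt`: the two `n`-cells having
`τ₀` as a face lie in distinct connected components of `G(≻ τ₀)`, and `ω₀` is the
smaller of the two maximum cells of these two components. -/
def IsPersPair (C : NComplex V n) (slt : Finset V → Finset V → Prop)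
    (τ₀ ω₀ : Finset V) : Prop :=
  τ₀ ∈ C.X ∧ τ₀.card = n ∧ ω₀ ∈ C.X ∧ ω₀.card = n + 1 ∧
  ∃ c₁ c₂ : Cell V, c₁ ≠ c₂ ∧ faceCell C τ₀ c₁ ∧ faceCell C τ₀ c₂ ∧
    c₂ ∉ KV C (Egt C slt τ₀) c₁ ∧
    ∃ m₂ : Cell V,
      IsMaxCell slt (KV C (Egt C slt τ₀) c₁) (some ω₀) ∧
      IsMaxCell slt (KV C (Egt C slt τ₀) c₂) m₂ ∧
      cslt slt (some ω₀) m₂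

/-- The optimal volume `OV(q, ω₀) = K_V(G(≻_q τ_{q,ω₀}), ω₀)`. -/
def OV (C : NComplex V n) (slt : Finset V → Finset V → Prop) (ω₀ : Finset V) :
    Set (Cell V) :=
  {c | ∃ τ, IsPersPair C slt τ ω₀ ∧ c ∈ KV C (Egt C slt τ) (some ω₀)}

/-- The stable volume `SV_ε(r, τ₀, ω₀) = K_V(G(r̂ ≥ r̂(τ₀) + ε), ω₀)`. -/
def SV (C : NComplex V n) (lev : Finset V → ℝ) (τ₀ ω₀ : Finset V) (ε : ℝ) :
    Set (Cell V) :=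
  KV C (Elev C lev (lev τ₀ + ε)) (some ω₀)

/-- `(qlev, qslt) ∈ R_ε`: an order with levels uniformly `ε/2`-close to `rlev`
satisfying the `(r, ω₀)`-order condition. -/
def InR (C : NComplex V n) (rlev : Finset V → ℝ)
    (rslt : Finset V → Finset V → Prop) (ω₀ : Finset V) (ε : ℝ)
    (qlev : Finset V → ℝ) (qslt : Finset V → Finset V → Prop) : Prop :=
  IsOWL C qlev qslt ∧ (∀ σ ∈ C.X, |qlev σ - rlev σ| < ε / 2) ∧
  (∀ σ ∈ C.X, rslt σ ω₀ → qslt σ ω₀)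

/-- `F_{ε,n}`: the `n`-simplices with level at least `lev τ₀ + ε` that precede `ω₀`. -/
def Fcells (C : NComplex V n) (lev : Finset V → ℝ)
    (slt : Finset V → Finset V → Prop) (τ₀ ω₀ : Finset V) (ε : ℝ) :
    Set (Finset V) :=
  {σ | σ ∈ C.X ∧ σ.card = n + 1 ∧ lev τ₀ + ε ≤ lev σ ∧ slt σ ω₀}

/-- `F_{ε,n-1}`: the `(n-1)`-simplices with level at least `lev τ₀ + ε` that
precede `ω₀`. -/
def Fedges (C : NComplex V n) (lev : Finset V → ℝ)
    (slt : Finset V → Finset V → Prop) (τ₀ ω₀ : Finset V) (ε : ℝ) :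
    Set (Finset V) :=
  {σ | σ ∈ C.X ∧ σ.card = n ∧ lev τ₀ + ε ≤ lev σ ∧ slt σ ω₀}

/-- `τ*(∂z)`: the `ℤ/2ℤ`-sum of the coefficients of `z` over the `n`-simplex
cofaces of `τ`. -/
def bsum (C : NComplex V n) (τ : Finset V) (z : Finset V → ZMod 2) : ZMod 2 :=
  ∑ ω ∈ C.X.filter (fun ω => ω.card = n + 1 ∧ τ ⊆ ω), z ω

/-- A feasible chain `z = ω₀ + Σ_{ω ∈ F_{ε,n}} α_ω ω` with `τ*(∂z) = 0` for all
`τ ∈ F_{ε,n-1}`. -/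
def IsFeasible (C : NComplex V n) (lev : Finset V → ℝ)
    (slt : Finset V → Finset V → Prop) (τ₀ ω₀ : Finset V) (ε : ℝ)
    (z : Finset V → ZMod 2) : Prop :=
  z ω₀ = 1 ∧
  (∀ ω : Finset V, ω ≠ ω₀ → ω ∉ Fcells C lev slt τ₀ ω₀ ε → z ω = 0) ∧
  (∀ τ ∈ Fedges C lev slt τ₀ ω₀ ε, bsum C τ z = 0)

/-- `‖z‖₀`: the number of simplices of `X` with nonzero coefficient in `z`. -/
def norm0 (C : NComplex V n) (z : Finset V → ZMod 2) : ℕ :=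
  (C.X.filter fun ω => z ω ≠ 0).card

/-- The level function of the perturbed order `q(r, η, A)`. -/
noncomputable def pertLev (C : NComplex V n) (rlev : Finset V → ℝ) (η : ℝ)
    (A : Set (Finset V)) : Finset V → ℝ :=
  fun σ => if (σ ∈ C.X ∧ σ.card = n + 1) ∨ σ ∈ A then rlev σ + η else rlev σ - η

/-- The strict order of the perturbed order `q(r, η, A)`. -/
def pertSlt (C : NComplex V n) (rlev : Finset V → ℝ)
    (rslt : Finset V → Finset V → Prop) (η : ℝ) (A : Set (Finset V)) :
    Finset V → Finset V → Prop :=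
  fun σ σ' => pertLev C rlev η A σ < pertLev C rlev η A σ' ∨
    (pertLev C rlev η A σ = pertLev C rlev η A σ' ∧ rslt σ σ')

/-- The `(n-1)`-simplices that are edges of the connected component of `c₀` in the
subgraph with edge set `E`. -/
def compEdges (C : NComplex V n) (E : Set (Finset V)) (c₀ : Cell V) :
    Set (Finset V) :=
  {τ | τ ∈ E ∧ ∃ c, faceCell C τ c ∧ c ∈ KV C E c₀}

/-- `IsPath C E c c' vs es`: `vs` is the vertex list and `es` the edge list of a walk
from `c` to `c'` in the subgraph of the dual graph with edge set `E`. -/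
inductive IsPath (C : NComplex V n) (E : Set (Finset V)) :
    Cell V → Cell V → List (Cell V) → List (Finset V) → Prop
  | nil (c : Cell V) : IsPath C E c c [c] []
  | cons {c c' c'' : Cell V} {vs : List (Cell V)} {es : List (Finset V)}
      {τ : Finset V} : τ ∈ E → faceCell C τ c → faceCell C τ c' → c ≠ c' →
      IsPath C E c' c'' vs es → IsPath C E c c'' (c :: vs) (τ :: es)


/-! Passing from `r` to `q = q(r, η, A)` lowers every `(n-1)`-simplex outside `A` relative
to `τ₀ ∈ A`, so `G(≻_q τ₀)` is a subgraph of `G(≻_r τ₀)` and the two components separated by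
`τ₀` stay separated; the order of the `n`-cells is unchanged. The components can only lose
their maxima: but the `r`-maximum `ω₀` of one component is still joined to its coface of `τ₀`
by `P`, and all edges of the other component, whose maximum is `ω₁`, are raised with `τ₀`. -/

structure IsStrictLinearOn {α : Type*} (S : Set α) (r : α → α → Prop) : Prop where
  irrefl : ∀ a ∈ S, ¬ r a a
  trans : ∀ a ∈ S, ∀ b ∈ S, ∀ c ∈ S, r a b → r b c → r a c
  total : ∀ a ∈ S, ∀ b ∈ S, a ≠ b → r a b ∨ r b a

section Components

variable {C : NComplex V n} {E E' : Set (Finset V)} {c d : Cell V}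

lemma adj_symm (h : adj C E c d) : adj C E d c :=
  let ⟨τ, hτ, hc, hd, hne⟩ := h
  ⟨τ, hτ, hd, hc, hne.symm⟩

lemma mem_KV_symm (h : d ∈ KV C E c) : c ∈ KV C E d :=
  (@Relation.ReflTransGen.stdSymm _ (adj C E) ⟨fun _ _ => adj_symm⟩).symm _ _ h

lemma KV_eq_of_mem (h : d ∈ KV C E c) : KV C E d = KV C E c := by
  ext b
  exact ⟨fun hb => h.trans hb, fun hb => (mem_KV_symm h).trans hb⟩

lemma KV_mono (hE : E ⊆ E') : KV C E c ⊆ KV C E' c := fun _ hd =>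
  Relation.ReflTransGen.mono (p := adj C E')
    (fun _ _ ⟨τ, hτ, hf, hf', hne⟩ => ⟨τ, hE hτ, hf, hf', hne⟩) _ _ hd

lemma KV_subset_of_compEdges_subset (h : compEdges C E c ⊆ E') : KV C E c ⊆ KV C E' c := by
  intro d hd
  induction hd with
  | refl => exact .refl
  | tail hb hadj ih =>
    obtain ⟨τ, hτ, hf, hf', hne⟩ := hadj
    exact ih.tail ⟨τ, h ⟨hτ, _, hf, hb⟩, hf, hf', hne⟩

lemma IsPath.edges_subset {vs : List (Cell V)} {es : List (Finset V)}
    (h : IsPath C E c d vs es) : {τ | τ ∈ es} ⊆ E := by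
  induction h with
  | nil => simp
  | cons hτ _ _ _ _ ih =>
    intro τ' hτ'
    rcases List.mem_cons.1 hτ' with rfl | hτ'
    exacts [hτ, ih hτ']

lemma IsPath.mem_KV {vs : List (Cell V)} {es : List (Finset V)}
    (h : IsPath C E c d vs es) (hE : {τ | τ ∈ es} ⊆ E') : d ∈ KV C E' c := by
  induction h with
  | nil => exact .refl
  | cons hτ hf hf' hne _ ih =>
    exact .head ⟨_, hE List.mem_cons_self, hf, hf', hne⟩
      (ih fun τ' hτ' => hE (List.mem_cons_of_mem _ hτ'))

lemma IsCell.of_faceCell {τ : Finset V} (h : faceCell C τ c) : IsCell C c := by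
  cases c with
  | none => trivial
  | some ω => exact ⟨h.1, h.2.1⟩

lemma IsCell.of_mem_KV (hc : IsCell C c) (hd : d ∈ KV C E c) : IsCell C d := by
  induction hd with
  | refl => exact hc
  | tail _ hadj _ =>
    obtain ⟨_, _, _, hf, _⟩ := hadj
    exact .of_faceCell hf

end Components

section MaxCells

variable {C : NComplex V n} {slt slt' : Finset V → Finset V → Prop} {S T : Set (Cell V)}
  {c d m m' : Cell V}

lemma IsStrictLinearOn.cslt_asymm (hs : IsStrictLinearOn (C.X : Set (Finset V)) slt)
    (hc : IsCell C c) (hd : IsCell C d) (h : cslt slt c d) : ¬ cslt slt d c := by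
  match c, d with
  | some σ, some σ' => exact fun h' => hs.irrefl σ hc.1 (hs.trans σ hc.1 σ' hd.1 σ hc.1 h h')
  | some _, none => exact id
  | none, _ => exact h.elim

lemma IsMaxCell.eq (hs : IsStrictLinearOn (C.X : Set (Finset V)) slt)
    (hS : ∀ c ∈ S, IsCell C c) (h : IsMaxCell slt S m) (h' : IsMaxCell slt S m') :
    m = m' := by
  by_contra hne
  exact hs.cslt_asymm (hS m h.1) (hS m' h'.1) (h'.2 m h.1 hne) (h.2 m' h'.1 (Ne.symm hne))

lemma IsMaxCell.of_subset (h : IsMaxCell slt S m) (hm : m ∈ T) (hTS : T ⊆ S)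
    (hS : ∀ c ∈ S, IsCell C c)
    (hord : ∀ c d, IsCell C c → IsCell C d → cslt slt c d → cslt slt' c d) :
    IsMaxCell slt' T m :=
  ⟨hm, fun c hc hne => hord c m (hS c (hTS hc)) (hS m h.1) (h.2 c (hTS hc) hne)⟩

end MaxCells

section PersistencePairs

variable {C : NComplex V n} {slt slt' : Finset V → Finset V → Prop} {τ τ' ω₀ : Finset V}

lemma IsPersPair.isMaxCell_KV (h : IsPersPair C slt τ ω₀) :
    IsMaxCell slt (KV C (Egt C slt τ) (some ω₀)) (some ω₀) := by
  obtain ⟨-, -, -, -, c₁, -, -, -, -, -, -, hmax, -⟩ := h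
  rwa [KV_eq_of_mem hmax.1]

/-- In `G(≻ τ)` the edge `τ'` joins the components of `ω₀` and of the larger maximum of
`G(≻ τ')`, contradicting the maximality of `ω₀`. -/
lemma IsPersPair.not_lt (hs : IsStrictLinearOn (C.X : Set (Finset V)) slt)
    (h : IsPersPair C slt τ ω₀) (h' : IsPersPair C slt τ' ω₀) : ¬ slt τ τ' := by
  intro hlt
  obtain ⟨hτ'X, hτ'card, -, -, d₁, d₂, hd, hf₁, hf₂, -, m₂, hmax₁, hmax₂, hω₀m₂⟩ := h'
  have hsub : Egt C slt τ' ⊆ Egt C slt τ := fun σ ⟨hσX, hσcard, hσ⟩ =>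
    ⟨hσX, hσcard, hs.trans τ h.1 τ' hτ'X σ hσX hlt hσ⟩
  have hm₂ : m₂ ∈ KV C (Egt C slt τ) (some ω₀) :=
    (mem_KV_symm (KV_mono hsub hmax₁.1)).trans <|
      Relation.ReflTransGen.head ⟨τ', ⟨hτ'X, hτ'card, hlt⟩, hf₁, hf₂, hd⟩ (KV_mono hsub hmax₂.1)
  have hω₀ : IsCell C (some ω₀) := (IsCell.of_faceCell hf₁).of_mem_KV hmax₁.1
  have hm₂cell : IsCell C m₂ := (IsCell.of_faceCell hf₂).of_mem_KV hmax₂.1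
  by_cases hm : m₂ = some ω₀
  · exact hs.cslt_asymm hω₀ hω₀ (hm ▸ hω₀m₂) (hm ▸ hω₀m₂)
  · exact hs.cslt_asymm hω₀ hm₂cell hω₀m₂ (h.isMaxCell_KV.2 m₂ hm₂ hm)

lemma IsPersPair.unique (hs : IsStrictLinearOn (C.X : Set (Finset V)) slt)
    (h : IsPersPair C slt τ ω₀) (h' : IsPersPair C slt τ' ω₀) : τ = τ' := by
  by_contra hne
  rcases hs.total τ h.1 τ' h'.1 hne with hlt | hlt
  exacts [h.not_lt hs h' hlt, h'.not_lt hs h hlt]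

lemma IsPersPair.of_egt_subset (h : IsPersPair C slt τ ω₀)
    (hE : Egt C slt' τ ⊆ Egt C slt τ)
    (hord : ∀ c d, IsCell C c → IsCell C d → cslt slt c d → cslt slt' c d)
    (hmax : ∀ c, faceCell C τ c → ∀ m, IsMaxCell slt (KV C (Egt C slt τ) c) m →
      m ∈ KV C (Egt C slt' τ) c) :
    IsPersPair C slt' τ ω₀ := by
  obtain ⟨hτX, hτcard, hω₀X, hω₀card, c₁, c₂, hc, hf₁, hf₂, hsep, m₂, hmax₁, hmax₂, hω₀m₂⟩ := h
  have hcells : ∀ {c}, faceCell C τ c → ∀ d ∈ KV C (Egt C slt τ) c, IsCell C d :=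
    fun hf _ hd => (IsCell.of_faceCell hf).of_mem_KV hd
  refine ⟨hτX, hτcard, hω₀X, hω₀card, c₁, c₂, hc, hf₁, hf₂,
    fun h₂ => hsep (KV_mono hE h₂), m₂,
    hmax₁.of_subset (hmax c₁ hf₁ _ hmax₁) (KV_mono hE) (hcells hf₁) hord,
    hmax₂.of_subset (hmax c₂ hf₂ _ hmax₂) (KV_mono hE) (hcells hf₂) hord, ?_⟩
  exact hord _ _ (hcells hf₁ _ hmax₁.1) (hcells hf₂ _ hmax₂.1) hω₀m₂

end PersistencePairs

section Perturbation

variable {C : NComplex V n} {rlev : Finset V → ℝ} {rslt : Finset V → Finset V → Prop}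
  {η : ℝ} {A : Set (Finset V)} {σ σ' τ₀ : Finset V}

lemma IsOWL.isStrictLinearOn (hr : IsOWL C rlev rslt) :
    IsStrictLinearOn (C.X : Set (Finset V)) rslt :=
  ⟨hr.2.1, hr.2.2.1, hr.2.2.2.1⟩

lemma IsOWL.rslt_of_rlev_lt (hr : IsOWL C rlev rslt) (hσ : σ ∈ C.X) (hσ' : σ' ∈ C.X)
    (h : rlev σ < rlev σ') : rslt σ σ' := by
  rcases hr.2.2.2.1 σ hσ σ' hσ' (by rintro rfl; exact h.false) with h' | h'
  · exact h'
  · exact absurd (hr.2.2.2.2.1 σ' hσ' σ hσ h') h.not_ge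

lemma pertLev_of_isCell (hσ : IsCell C (some σ)) : pertLev C rlev η A σ = rlev σ + η :=
  if_pos (.inl hσ)

lemma pertLev_of_mem (hσ : σ ∈ A) : pertLev C rlev η A σ = rlev σ + η :=
  if_pos (.inr hσ)

lemma IsOWL.isStrictLinearOn_pertSlt (hr : IsOWL C rlev rslt) :
    IsStrictLinearOn (C.X : Set (Finset V)) (pertSlt C rlev rslt η A) where
  irrefl σ hσ := by
    rintro (h | ⟨-, h⟩)
    exacts [h.false, hr.2.1 σ hσ h]
  trans σ hσ σ' hσ' σ'' hσ'' := by
    rintro (h₁ | ⟨h₁, hs₁⟩) (h₂ | ⟨h₂, hs₂⟩)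
    · exact .inl (h₁.trans h₂)
    · exact .inl (h₂ ▸ h₁)
    · exact .inl (h₁ ▸ h₂)
    · exact .inr ⟨h₁.trans h₂, hr.2.2.1 σ hσ σ' hσ' σ'' hσ'' hs₁ hs₂⟩
  total σ hσ σ' hσ' hne := by
    rcases lt_trichotomy (pertLev C rlev η A σ) (pertLev C rlev η A σ') with h | h | h
    · exact .inl (.inl h)
    · exact (hr.2.2.2.1 σ hσ σ' hσ' hne).imp (fun hs => .inr ⟨h, hs⟩) (fun hs => .inr ⟨h.symm, hs⟩)
    · exact .inr (.inl h)

lemma IsOWL.pertSlt_of_rslt (hr : IsOWL C rlev rslt) (hσ : σ ∈ C.X) (hσ' : σ' ∈ C.X)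
    (hshift : pertLev C rlev η A σ - rlev σ = pertLev C rlev η A σ' - rlev σ')
    (h : rslt σ σ') : pertSlt C rlev rslt η A σ σ' := by
  rcases (hr.2.2.2.2.1 σ hσ σ' hσ' h).lt_or_eq with hlt | heq
  · exact .inl (by linarith)
  · exact .inr ⟨by linarith, h⟩

lemma IsOWL.cslt_pertSlt (hr : IsOWL C rlev rslt) {c d : Cell V} (hc : IsCell C c)
    (hd : IsCell C d) (h : cslt rslt c d) : cslt (pertSlt C rlev rslt η A) c d := by
  match c, d with
  | some σ, some σ' =>
    exact hr.pertSlt_of_rslt hc.1 hd.1 (by rw [pertLev_of_isCell hc, pertLev_of_isCell hd]; ring) h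
  | some _, none => trivial
  | none, _ => exact h.elim

lemma IsOWL.inter_egt_subset_egt_pertSlt (hr : IsOWL C rlev rslt) (hτ₀X : τ₀ ∈ C.X)
    (hτ₀A : τ₀ ∈ A) : A ∩ Egt C rslt τ₀ ⊆ Egt C (pertSlt C rlev rslt η A) τ₀ :=
  fun _ ⟨hτA, hτX, hτcard, hτ⟩ => ⟨hτX, hτcard, hr.pertSlt_of_rslt hτ₀X hτX
    (by rw [pertLev_of_mem hτ₀A, pertLev_of_mem hτA]; ring) hτ⟩

lemma IsOWL.egt_pertSlt_subset (hr : IsOWL C rlev rslt) (hη : 0 ≤ η) (hτ₀X : τ₀ ∈ C.X)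
    (hτ₀A : τ₀ ∈ A) (hA : A \ {τ₀} ⊆ Egt C rslt τ₀) :
    Egt C (pertSlt C rlev rslt η A) τ₀ ⊆ Egt C rslt τ₀ := by
  rintro τ ⟨hτX, hτcard, hτ⟩
  by_cases hτA : τ ∈ A
  · have hne : τ ≠ τ₀ := by
      rintro rfl
      exact hr.isStrictLinearOn_pertSlt.irrefl τ hτX hτ
    exact hA ⟨hτA, hne⟩
  · have hlow : pertLev C rlev η A τ = rlev τ - η :=
      if_neg (by rintro (⟨-, h⟩ | h) <;> [omega; exact hτA h])
    refine ⟨hτX, hτcard, ?_⟩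
    rcases hτ with h | ⟨-, h⟩
    · rw [pertLev_of_mem hτ₀A, hlow] at h
      exact hr.rslt_of_rlev_lt hτ₀X hτX (by linarith)
    · exact h

end Perturbation

lemma TwoCofaces.eq_or_eq {C : NComplex V n} (htwo : TwoCofaces C) {τ : Finset V}
    (hτX : τ ∈ C.X) (hτcard : τ.card = n) {c d e : Cell V} (hc : faceCell C τ c)
    (hd : faceCell C τ d) (hcd : c ≠ d) (he : faceCell C τ e) : e = c ∨ e = d := by
  obtain ⟨c₁, c₂, -, hiff⟩ := htwo τ hτX hτcard
  rcases (hiff c).1 hc with rfl | rfl <;> rcases (hiff d).1 hd with rfl | rfl <;>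
    rcases (hiff e).1 he with rfl | rfl <;> simp_all

theorem persistence_pair_preserved_under_perturbation_general
    (C : NComplex V n) (htwo : TwoCofaces C)
    (rlev : Finset V → ℝ) (rslt : Finset V → Finset V → Prop)
    (hr : IsOWL C rlev rslt)
    (τ₀ ω₀ : Finset V) (hpair : IsPersPair C rslt τ₀ ω₀)
    (ωe ωe' : Cell V) (hfe : faceCell C τ₀ ωe) (hfe' : faceCell C τ₀ ωe')
    (hee : ωe ≠ ωe')
    (ω₁ : Cell V) (hω₁ : IsMaxCell rslt (KV C (Egt C rslt τ₀) ωe') ω₁)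
    (vs : List (Cell V)) (es : List (Finset V))
    (hP : IsPath C (Egt C rslt τ₀) (some ω₀) ωe vs es)
    (η : ℝ) (hη : 0 < η) :
    ∀ A : Set (Finset V),
      A = {τ | τ ∈ es} ∪ {τ₀} ∪ compEdges C (Egt C rslt τ₀) ω₁ →
      IsPersPair C (pertSlt C rlev rslt η A) τ₀ ω₀ ∧
      ∀ τ : Finset V, IsPersPair C (pertSlt C rlev rslt η A) τ ω₀ → τ = τ₀ := by
  intro A hA
  have hτ₀X : τ₀ ∈ C.X := hpair.1
  have hτ₀A : τ₀ ∈ A := hA ▸ .inl (.inr rfl)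
  have hraised := hr.inter_egt_subset_egt_pertSlt (η := η) hτ₀X hτ₀A
  have hq : IsPersPair C (pertSlt C rlev rslt η A) τ₀ ω₀ := by
    refine hpair.of_egt_subset (hr.egt_pertSlt_subset hη.le hτ₀X hτ₀A ?_)
      (fun _ _ => hr.cslt_pertSlt) fun c hc m hm => ?_
    · rintro τ ⟨hτ, hne⟩
      rcases hA ▸ hτ with (hτ | hτ) | hτ
      exacts [hP.edges_subset hτ, (hne hτ).elim, hτ.1]
    rcases htwo.eq_or_eq hpair.1 hpair.2.1 hfe hfe' hee hc with rfl | rfl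
    · have hKV : KV C (Egt C rslt τ₀) c = KV C (Egt C rslt τ₀) (some ω₀) :=
        KV_eq_of_mem (hP.mem_KV hP.edges_subset)
      have hcells : ∀ d ∈ KV C (Egt C rslt τ₀) (some ω₀), IsCell C d :=
        fun _ hd => (IsCell.of_faceCell hc).of_mem_KV (hKV ▸ hd)
      have hmω₀ : m = some ω₀ := (hKV ▸ hm).eq hr.isStrictLinearOn hcells hpair.isMaxCell_KV
      rw [hmω₀]
      exact mem_KV_symm (hP.mem_KV fun τ hτ => hraised ⟨hA ▸ .inl (.inl hτ), hP.edges_subset hτ⟩)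
    · have hsub := KV_subset_of_compEdges_subset (c := ω₁)
        fun τ hτ => hraised ⟨hA ▸ .inr hτ, hτ.1⟩
      have hcω₁ : c ∈ KV C (Egt C rslt τ₀) ω₁ := mem_KV_symm hω₁.1
      rw [KV_eq_of_mem (hsub hcω₁)]
      exact hsub (KV_eq_of_mem hcω₁ ▸ hm.1)
  exact ⟨hq, fun τ hτ => hτ.unique hr.isStrictLinearOn_pertSlt hq⟩

/-- Fact 3.16: the persistence pair `(τ₀, ω₀)` is preserved under
the perturbation `q(r, η, A)` with `A = (edges of P) ∪ {τ₀} ∪ (edges of the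
component of ω₁ in G(≻_r τ₀))`. -/
theorem persistence_pair_preserved_under_perturbation
    (hn : 2 ≤ n) (C : NComplex V n) (htwo : TwoCofaces C) (hconn : DualConn C)
    (rlev : Finset V → ℝ) (rslt : Finset V → Finset V → Prop)
    (hr : IsOWL C rlev rslt)
    (τ₀ ω₀ : Finset V) (hpair : IsPersPair C rslt τ₀ ω₀)
    (ωe ωe' : Cell V) (hfe : faceCell C τ₀ ωe) (hfe' : faceCell C τ₀ ωe')
    (hee : ωe ≠ ωe') (hin : ωe ∈ KV C (Egt C rslt τ₀) (some ω₀))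
    (ω₁ : Cell V) (hω₁ : IsMaxCell rslt (KV C (Egt C rslt τ₀) ωe') ω₁)
    (vs : List (Cell V)) (es : List (Finset V))
    (hP : IsPath C (Egt C rslt τ₀) (some ω₀) ωe vs es) (hnd : vs.Nodup)
    (η : ℝ) (hη : 0 < η) :
    ∀ A : Set (Finset V),
      A = {τ | τ ∈ es} ∪ {τ₀} ∪ compEdges C (Egt C rslt τ₀) ω₁ →
      IsPersPair C (pertSlt C rlev rslt η A) τ₀ ω₀ ∧
      ∀ τ : Finset V, IsPersPair C (pertSlt C rlev rslt η A) τ ω₀ → τ = τ₀ :=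
  persistence_pair_preserved_under_perturbation_general C htwo rlev rslt hr τ₀ ω₀ hpair ωe ωe' hfe
    hfe' hee ω₁ hω₁ vs es hP η hη

end StableVol
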